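/- Let S ⊆ ℚ × ℚ be a convex set contained in the epigraph E = {(t, y) ∈ ℚ² : y ≥ (t² + t)/2} such that (i, (i² + i)/2) ∈ S for every natural number i. Then the set of extreme points of S is infinite; in particular, S is not an H-polyhedron. -/

import Mathlib

/-- The parabola function `f(t) = (t² + t)/2`. -/
def parab (t : ℚ) : ℚ := (t ^ 2 + t) / 2

/-- The epigraph `E = {(t, y) : y ≥ (t² + t)/2}`. -/
def parabEpigraph : Set (ℚ × ℚ) := {p | parab p.1 ≤ p.2}

/-- An H-polyhedron in `ℚ × ℚ`: a finite intersection of closed half-spaces. -/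
def IsHPolyhedron2 (P : Set (ℚ × ℚ)) : Prop :=
  ∃ (m : ℕ) (a : Fin m → ℚ × ℚ) (b : Fin m → ℚ),
    P = ⋂ i : Fin m, {p : ℚ × ℚ | (a i).1 * p.1 + (a i).2 * p.2 ≤ b i}

/-!
Since the parabola is strictly convex, every point of it that lies in `S ⊆ E` is an extreme
point of `S`, and by hypothesis there are infinitely many such points. On the other hand, an
extreme point `x` of a finite intersection of half-spaces is determined by the set of constraints
active at it: if `y` is another point with the same active constraints, then `x ± t (x - y)` stays
in the intersection for small `t > 0`, and `x` is the midpoint of these two points, so `x = y`.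
Hence an H-polyhedron has only finitely many extreme points.
-/

open Set Filter Topology

section HalfSpaces

variable {𝕜 E ι : Type*} [Field 𝕜] [LinearOrder 𝕜] [IsStrictOrderedRing 𝕜] [TopologicalSpace 𝕜]
  [OrderTopology 𝕜] [AddCommGroup E] [Module 𝕜 E] {φ : ι → E →ₗ[𝕜] 𝕜} {b : ι → 𝕜} {x d : E}

theorem eventually_add_smul_mem_iInter_halfSpaces [Finite ι] (hx : x ∈ ⋂ i, {x | φ i x ≤ b i})
    (hd : ∀ i, φ i x = b i → φ i d = 0) :
    ∀ᶠ t in 𝓝 (0 : 𝕜), x + t • d ∈ ⋂ i, {x | φ i x ≤ b i} := by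
  simp only [mem_iInter, mem_ofPred_eq, map_add, map_smul, smul_eq_mul] at hx ⊢
  refine eventually_all.2 fun i => ?_
  rcases (hx i).eq_or_lt with hi | hi
  · exact .of_forall fun t => by simp [hi, hd i hi]
  · have : Tendsto (fun t : 𝕜 => φ i x + t * φ i d) (𝓝 0) (𝓝 (φ i x)) :=
      (continuous_const.add (continuous_id.mul continuous_const)).tendsto' _ _ (by simp)
    exact (this.eventually (gt_mem_nhds hi)).mono fun t ht => ht.le

theorem eq_zero_of_mem_extremePoints_iInter_halfSpaces [Finite ι]
    (hx : x ∈ (⋂ i, {x | φ i x ≤ b i}).extremePoints 𝕜) (hd : ∀ i, φ i x = b i → φ i d = 0) :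
    d = 0 := by
  have hd' : ∀ i, φ i x = b i → φ i (-d) = 0 := fun i hi => by simp [hd i hi]
  obtain ⟨t, ht, hplus, hminus⟩ := ((eventually_add_smul_mem_iInter_halfSpaces hx.1 hd).and
    (eventually_add_smul_mem_iInter_halfSpaces hx.1 hd')).exists_gt
  have hmid : x ∈ openSegment 𝕜 (x + t • d) (x + t • -d) := by
    simpa [sub_eq_add_neg] using mem_openSegment_add_sub (𝕜 := 𝕜) x (t • d)
  simpa [ht.ne'] using hx.2 hplus hminus hmid

theorem finite_extremePoints_iInter_halfSpaces [Finite ι] (φ : ι → E →ₗ[𝕜] 𝕜) (b : ι → 𝕜) :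
    ((⋂ i, {x | φ i x ≤ b i}).extremePoints 𝕜).Finite := by
  refine Finite.of_finite_image (f := fun x => {i | φ i x = b i}) (toFinite _) ?_
  intro x hx y hy hxy
  have hd : ∀ i, φ i x = b i → φ i (x - y) = 0 := fun i hi => by
    have hi' : φ i y = b i := (congrArg (i ∈ ·) hxy).mp hi
    simp [hi, hi']
  exact sub_eq_zero.1 (eq_zero_of_mem_extremePoints_iInter_halfSpaces hx hd)

end HalfSpaces

theorem StrictConvexOn.mk_mem_extremePoints_epigraph {𝕜 E : Type*} [Field 𝕜] [LinearOrder 𝕜]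
    [IsStrictOrderedRing 𝕜] [AddCommGroup E] [Module 𝕜 E] {s : Set E} {f : E → 𝕜}
    (hf : StrictConvexOn 𝕜 s f) {x : E} (hx : x ∈ s) :
    (x, f x) ∈ {p : E × 𝕜 | p.1 ∈ s ∧ f p.1 ≤ p.2}.extremePoints 𝕜 := by
  refine ⟨⟨hx, le_rfl⟩, ?_⟩
  rintro ⟨x₁, y₁⟩ ⟨hx₁, hy₁⟩ ⟨x₂, y₂⟩ ⟨hx₂, hy₂⟩ ⟨a, b, ha, hb, hab, h⟩
  simp only [Prod.ext_iff, Prod.smul_mk, Prod.mk_add_mk, smul_eq_mul] at h hy₁ hy₂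
  obtain ⟨hxab, hyab⟩ := h
  obtain rfl : x₁ = x₂ := by
    by_contra hne
    have := hf.2 hx₁ hx₂ hne ha hb hab
    rw [hxab, smul_eq_mul, smul_eq_mul] at this
    nlinarith [mul_le_mul_of_nonneg_left hy₁ ha.le, mul_le_mul_of_nonneg_left hy₂ hb.le]
  rw [← add_smul, hab, one_smul] at hxab
  subst hxab
  refine Prod.ext rfl (le_antisymm (not_lt.1 fun hfy => ?_) hy₁)
  have hlt : a * f x₁ < a * y₁ := mul_lt_mul_of_pos_left hfy ha
  have hfx : a * f x₁ + b * f x₁ = f x₁ := by rw [← add_mul, hab, one_mul]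
  linarith [mul_le_mul_of_nonneg_left hy₂ hb.le]

theorem strictConvexOn_parab : StrictConvexOn ℚ univ parab := by
  refine ⟨convex_univ, fun x _ y _ hxy a b ha hb hab => ?_⟩
  obtain rfl : b = 1 - a := by linarith
  -- `a f x + b f y - f (a x + b y) = a b (x - y)² / 2`
  have := mul_pos (mul_pos ha hb) (pow_pos (abs_pos.2 (sub_ne_zero.2 hxy)) 2)
  simp only [parab, smul_eq_mul, sq_abs] at this ⊢
  nlinarith

theorem mk_parab_mem_extremePoints {S : Set (ℚ × ℚ)} (hSE : S ⊆ parabEpigraph) {t : ℚ}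
    (ht : (t, parab t) ∈ S) : (t, parab t) ∈ S.extremePoints ℚ :=
  inter_extremePoints_subset_extremePoints_of_subset
    (A := {p : ℚ × ℚ | p.1 ∈ univ ∧ parab p.1 ≤ p.2}) (fun _ hp => ⟨mem_univ _, hSE hp⟩)
    ⟨ht, strictConvexOn_parab.mk_mem_extremePoints_epigraph (mem_univ t)⟩

theorem IsHPolyhedron2.finite_extremePoints {P : Set (ℚ × ℚ)} (hP : IsHPolyhedron2 P) :
    (P.extremePoints ℚ).Finite := by
  obtain ⟨m, a, b, rfl⟩ := hP
  exact finite_extremePoints_iInter_halfSpaces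
    (fun i => (a i).1 • LinearMap.fst ℚ ℚ ℚ + (a i).2 • LinearMap.snd ℚ ℚ ℚ) b

theorem infinite_extremePoints_and_not_hPolyhedron_general (S : Set (ℚ × ℚ))
    (hSE : S ⊆ parabEpigraph)
    (hrun : ∀ i : ℕ, ((i : ℚ), parab (i : ℚ)) ∈ S) :
    (S.extremePoints ℚ).Infinite ∧ ¬ IsHPolyhedron2 S := by
  have hinf : (S.extremePoints ℚ).Infinite :=
    infinite_of_injective_forall_mem (f := fun i : ℕ => ((i : ℚ), parab i))
      (fun _ _ h => Nat.cast_injective (congrArg Prod.fst h))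
      fun i => mk_parab_mem_extremePoints hSE (hrun i)
  exact ⟨hinf, fun hP => hinf hP.finite_extremePoints⟩

/-- A convex subset of the epigraph containing every point `(i, (i² + i)/2)` for `i : ℕ`
has infinitely many extreme points; in particular it is not an H-polyhedron. -/
theorem infinite_extremePoints_and_not_hPolyhedron (S : Set (ℚ × ℚ))
    (hS : Convex ℚ S) (hSE : S ⊆ parabEpigraph)
    (hrun : ∀ i : ℕ, ((i : ℚ), parab (i : ℚ)) ∈ S) :
    (S.extremePoints ℚ).Infinite ∧ ¬ IsHPolyhedron2 S :=
  infinite_extremePoints_and_not_hPolyhedron_general S hSE hrun
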